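/- arXiv:2105.14999 — 4 statements merged into one kernel-verified Lean document; each statement's English description precedes it below -/
import Mathlib

section
/- With S(x,y) = R((n/2)ln y − ln x + n/2) (the ideal-gas entropy), the functions H₁ = k₁x, H₂ = 0, H₃ = k₂x^((n+2)/n), H₅ = 2k₁x(k₁ζ − Ry)/(Rn) satisfy xy(xH₁·∂S/∂x − H₅·∂S/∂y) + κ(H₂·∂H₃/∂x + H₃·∂H₃/∂y) + ζH₁² = 0 for all x > 0, y > 0. -/
open Real

theorem deriv_entropy_fst (R n y : ℝ) {x : ℝ} (hx : x ≠ 0) :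
    deriv (fun x' => R * (n / 2 * log y - log x' + n / 2)) x = -R / x := by
  have h := (((hasDerivAt_log hx).const_sub (n / 2 * log y)).add_const (n / 2)).const_mul R
  rw [h.deriv]
  ring

theorem deriv_entropy_snd (R n x : ℝ) {y : ℝ} (hy : y ≠ 0) :
    deriv (fun y' => R * (n / 2 * log y' - log x + n / 2)) y = R * n / (2 * y) := by
  have h := ((((hasDerivAt_log hy).const_mul (n / 2)).sub_const (log x)).add_const
    (n / 2)).const_mul R
  rw [h.deriv]
  ring

theorem quotient_eq1_ideal (k₁ k₂ R n ζ κ : ℝ) (hR : R ≠ 0) (hn : n ≠ 0) :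
    ∀ x y : ℝ, 0 < x → 0 < y →
      x*y*(x*(k₁*x) * deriv (fun x' => R*(n/2 * Real.log y - Real.log x' + n/2)) x
          - (2*k₁*x*(k₁*ζ - R*y)/(R*n)) *
              deriv (fun y' => R*(n/2 * Real.log y' - Real.log x + n/2)) y)
        + κ*(0 * deriv (fun x' => k₂ * x' ^ ((n+2)/n)) x
          + (k₂ * x ^ ((n+2)/n)) * deriv (fun _y' : ℝ => k₂ * x ^ ((n+2)/n)) y)
        + ζ*(k₁*x)^2 = 0 := by
  intro x y hx hy
  rw [deriv_entropy_fst R n y hx.ne', deriv_entropy_snd R n x hy.ne', deriv_const]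
  -- The first bracket collapses to `-k₁²ζx²` once `R n` cancels; the `κ`-term is zero.
  field_simp
  ring
end

section
/- The functions H₁,₀(y) = y^(2−2gλ/(c₁R))(c₂y^(−gλ/(c₁R)) + c₃), H₂,₀(y) = (gλ−Rc₁)/(Ry), H₃,₀(y) = c₁, H₅,₀(y) = y^(3−2gλ/(Rc₁))(c₃ + Rc₁c₂y^(−gλ/(Rc₁))/(Rc₁−gλ)) satisfy the ODE H₅,₀H₂,₀′ + H₃,₀H₁,₀′ + 3H₁,₀H₂,₀ = 0 for all y > 0. -/
/-! Everything depends on the constants only through κ = gλ/(Rc₁): then H₂,₀ = c₁(κ - 1)/y and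
H₅,₀ = y^(3-2κ)(c₃ + c₂y^(-κ)/(1 - κ)). After differentiating, the left-hand side is a combination of
c₁c₂y^(1-3κ) and c₁c₃y^(1-2κ) with coefficients 1 + (2 - 3κ) + 3(κ - 1) = 0 and
(1 - κ) + (2 - 2κ) + 3(κ - 1) = 0. -/

open Real

lemma hasDerivAt_rpow_mul_const_mul_rpow_add {y : ℝ} (hy : 0 < y) (p q a b : ℝ) :
    HasDerivAt (fun x => x ^ p * (a * x ^ q + b))
      (y ^ (p - 1) * ((p + q) * a * y ^ q + p * b)) y := by
  have hp := hasDerivAt_rpow_const (p := p) (Or.inl hy.ne')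
  have hq := ((hasDerivAt_rpow_const (p := q) (Or.inl hy.ne')).const_mul a).add_const b
  refine (hp.mul hq).congr_deriv ?_
  rw [rpow_sub_one hy.ne', rpow_sub_one hy.ne']
  field_simp
  ring

lemma hasDerivAt_const_div {y : ℝ} (hy : y ≠ 0) (c : ℝ) :
    HasDerivAt (fun x => c / x) (-(c / y ^ 2)) y := by
  simpa [div_eq_mul_inv] using (hasDerivAt_inv hy).const_mul c

theorem virial_zeroth_eq3_of_ratio {y : ℝ} (hy : 0 < y) (c₁ c₂ c₃ κ : ℝ) (hκ : κ ≠ 1) :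
    (y ^ (3 - 2*κ) * (c₃ + c₂ * y ^ (-κ) / (1 - κ))) * deriv (fun x => c₁*(κ-1)/x) y
      + c₁ * deriv (fun x => x ^ (2 - 2*κ) * (c₂ * x ^ (-κ) + c₃)) y
      + 3 * (y ^ (2 - 2*κ) * (c₂ * y ^ (-κ) + c₃)) * (c₁*(κ-1)/y) = 0 := by
  rw [(hasDerivAt_const_div hy.ne' _).deriv,
    (hasDerivAt_rpow_mul_const_mul_rpow_add hy _ _ _ _).deriv]
  have rpow_three_sub : y ^ (3 - 2*κ) = y ^ (1 - 2*κ) * y ^ 2 := by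
    rw [← rpow_two, ← rpow_add hy]; ring_nf
  have rpow_two_sub : y ^ (2 - 2*κ) = y ^ (1 - 2*κ) * y := by
    rw [← rpow_add_one hy.ne']; ring_nf
  have rpow_pred_two_sub : y ^ (2 - 2*κ - 1) = y ^ (1 - 2*κ) := by ring_nf
  have h1κ : 1 - κ ≠ 0 := sub_ne_zero.mpr hκ.symm
  rw [rpow_three_sub, rpow_two_sub, rpow_pred_two_sub]
  field_simp
  ring

theorem virial_zeroth_eq3 (R g lam c₁ c₂ c₃ : ℝ)
    (hR : R ≠ 0) (hc₁ : c₁ ≠ 0) (h : R*c₁ - g*lam ≠ 0) :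
    ∀ y : ℝ, 0 < y →
      (y ^ (3 - 2*g*lam/(R*c₁)) *
            (c₃ + R*c₁*c₂ * y ^ (-(g*lam/(R*c₁))) / (R*c₁ - g*lam))) *
          deriv (fun y' => (g*lam - R*c₁)/(R*y')) y
        + c₁ * deriv (fun y' => y' ^ (2 - 2*g*lam/(c₁*R)) *
              (c₂ * y' ^ (-(g*lam/(c₁*R))) + c₃)) y
        + 3 * (y ^ (2 - 2*g*lam/(c₁*R)) * (c₂ * y ^ (-(g*lam/(c₁*R))) + c₃)) *
            ((g*lam - R*c₁)/(R*y)) = 0 := by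
  intro y hy
  set κ := g*lam/(R*c₁) with hκ
  have hκ1 : κ ≠ 1 := by
    rw [hκ, Ne, div_eq_one_iff_eq (mul_ne_zero hR hc₁)]
    exact fun h' => h (by rw [h', sub_self])
  have hexp : 2*g*lam/(c₁*R) = 2*κ := by rw [hκ]; ring
  have hexp' : 2*g*lam/(R*c₁) = 2*κ := by rw [hκ]; ring
  have hratio : g*lam/(c₁*R) = κ := by rw [hκ, mul_comm c₁ R]
  have hH₂ : (fun x => (g*lam - R*c₁)/(R*x)) = fun x => c₁*(κ-1)/x := by
    funext x; rw [hκ]; field_simp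
  have hH₅ : R*c₁*c₂ * y ^ (-κ) / (R*c₁ - g*lam) = c₂ * y ^ (-κ) / (1 - κ) := by
    rw [hκ]; field_simp
  rw [hexp, hexp', hratio, hH₂, hH₅, congrFun hH₂ y]
  exact virial_zeroth_eq3_of_ratio hy c₁ c₂ c₃ κ hκ1
end

section
/- The vector field V = α₁x∂_x + α₂y∂_y + (α₁+α₂)H₁∂_{H₁} + (2α₁+α₂/2)H₂∂_{H₂} + (α₁+3α₂/2)H₃∂_{H₃} + (α₁+3α₂/2)(H₄−gλ)∂_{H₄} + (α₁+2α₂)H₅∂_{H₅} generates a one-parameter scaling group under which the third quotient equation H₂H₅_y-type expression is invariant; concretely, under the scaling x ↦ e^(α₁ε)x, y ↦ e^(α₂ε)y, H₁ ↦ e^((α₁+α₂)ε)H₁, H₂ ↦ e^((2α₁+α₂/2)ε)H₂, H₃ ↦ e^((α₁+3α₂/2)ε)H₃, H₅ ↦ e^((α₁+2α₂)ε)H₅, the expression E₃ = H₅·∂H₂/∂y + x(H₃·∂H₁/∂y − H₁·∂H₂/∂x) + H₂(x·∂H₁/∂x + 2H₁) is multiplied by the factor e^((3α₁+3α₂/2)ε).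 -/
/-- The third quotient equation expression
`E₃ = H₅·∂H₂/∂y + x(H₃·∂H₁/∂y − H₁·∂H₂/∂x) + H₂(x·∂H₁/∂x + 2H₁)`. -/
noncomputable def E3 (H₁ H₂ H₃ H₅ : ℝ → ℝ → ℝ) (x y : ℝ) : ℝ :=
  H₅ x y * deriv (fun y' => H₂ x y') y
    + x * (H₃ x y * deriv (fun y' => H₁ x y') y - H₁ x y * deriv (fun x' => H₂ x' y) x)
    + H₂ x y * (x * deriv (fun x' => H₁ x' y) x + 2 * H₁ x y)

/-! Give `x`, `y`, `Hᵢ` the weights `α₁`, `α₂`, `wᵢ`, so that `∂_x`, `∂_y` have weights `-α₁`, `-α₂`.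
Every monomial of `E₃` then has weight `3α₁ + 3α₂/2`, and since `deriv` commutes with linear
rescalings of the variable, the transformation multiplies each monomial by `e^((3α₁+3α₂/2)ε)`. -/

theorem deriv_const_mul_comp_const_mul {𝕜 : Type*} [NontriviallyNormedField 𝕜] (f : 𝕜 → 𝕜)
    (c b x : 𝕜) : deriv (fun t => c * f (b * t)) x = c * b * deriv f (b * x) := by
  rw [deriv_const_mul_field, deriv_comp_mul_left (f := f), smul_eq_mul, mul_assoc]

theorem Real.exp_int_mul (x : ℝ) (n : ℤ) : Real.exp (n * x) = Real.exp x ^ n := by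
  obtain ⟨k, rfl | rfl⟩ := n.eq_nat_or_neg
  · simp [Real.exp_nat_mul]
  · simp [Real.exp_neg, Real.exp_nat_mul]

theorem scaling_symmetry_E3_general (α₁ α₂ ε : ℝ) (H₁ H₂ H₃ H₅ : ℝ → ℝ → ℝ) :
    ∀ x y : ℝ,
      E3 (fun x' y' => Real.exp ((α₁+α₂)*ε) * H₁ (Real.exp (-α₁*ε) * x') (Real.exp (-α₂*ε) * y'))
         (fun x' y' => Real.exp ((2*α₁+α₂/2)*ε) * H₂ (Real.exp (-α₁*ε) * x') (Real.exp (-α₂*ε) * y'))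
         (fun x' y' => Real.exp ((α₁+3*α₂/2)*ε) * H₃ (Real.exp (-α₁*ε) * x') (Real.exp (-α₂*ε) * y'))
         (fun x' y' => Real.exp ((α₁+2*α₂)*ε) * H₅ (Real.exp (-α₁*ε) * x') (Real.exp (-α₂*ε) * y'))
         x y
      = Real.exp ((3*α₁+3*α₂/2)*ε) *
          E3 H₁ H₂ H₃ H₅ (Real.exp (-α₁*ε) * x) (Real.exp (-α₂*ε) * y) := by
  intro x y
  simp only [E3]
  rw [deriv_const_mul_comp_const_mul (H₁ _), deriv_const_mul_comp_const_mul (H₂ _),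
    deriv_const_mul_comp_const_mul (H₁ · _), deriv_const_mul_comp_const_mul (H₂ · _)]
  -- All exponents are integer combinations of `α₁ε` and `α₂ε/2`, so every factor is a
  -- Laurent monomial in `p` and `q`, and the claim becomes a rational-function identity.
  set p := Real.exp (α₁ * ε)
  set q := Real.exp (α₂ * ε / 2)
  have hp : p ≠ 0 := (Real.exp_pos _).ne'
  have hq : q ≠ 0 := (Real.exp_pos _).ne'
  have monomial (m n : ℤ) {c : ℝ} (hc : c = m * (α₁ * ε) + n * (α₂ * ε / 2)) :
      Real.exp c = p ^ m * q ^ n := by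
    rw [hc, Real.exp_add, Real.exp_int_mul, Real.exp_int_mul]
  rw [monomial (c := (α₁+α₂)*ε) 1 2 (by push_cast; ring),
    monomial (c := (2*α₁+α₂/2)*ε) 2 1 (by push_cast; ring),
    monomial (c := (α₁+3*α₂/2)*ε) 1 3 (by push_cast; ring),
    monomial (c := (α₁+2*α₂)*ε) 1 4 (by push_cast; ring),
    monomial (c := (3*α₁+3*α₂/2)*ε) 3 3 (by push_cast; ring),
    monomial (c := -α₁*ε) (-1) 0 (by push_cast; ring),
    monomial (c := -α₂*ε) 0 (-2) (by push_cast; ring)]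
  field_simp

theorem scaling_symmetry_E3 (α₁ α₂ ε g lam : ℝ) (H₁ H₂ H₃ H₅ : ℝ → ℝ → ℝ)
    (h₁ : Differentiable ℝ (fun q : ℝ × ℝ => H₁ q.1 q.2))
    (h₂ : Differentiable ℝ (fun q : ℝ × ℝ => H₂ q.1 q.2))
    (h₃ : Differentiable ℝ (fun q : ℝ × ℝ => H₃ q.1 q.2))
    (h₅ : Differentiable ℝ (fun q : ℝ × ℝ => H₅ q.1 q.2)) :
    ∀ x y : ℝ,
      E3 (fun x' y' => Real.exp ((α₁+α₂)*ε) * H₁ (Real.exp (-α₁*ε) * x') (Real.exp (-α₂*ε) * y'))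
         (fun x' y' => Real.exp ((2*α₁+α₂/2)*ε) * H₂ (Real.exp (-α₁*ε) * x') (Real.exp (-α₂*ε) * y'))
         (fun x' y' => Real.exp ((α₁+3*α₂/2)*ε) * H₃ (Real.exp (-α₁*ε) * x') (Real.exp (-α₂*ε) * y'))
         (fun x' y' => Real.exp ((α₁+2*α₂)*ε) * H₅ (Real.exp (-α₁*ε) * x') (Real.exp (-α₂*ε) * y'))
         x y
      = Real.exp ((3*α₁+3*α₂/2)*ε) *
          E3 H₁ H₂ H₃ H₅ (Real.exp (-α₁*ε) * x) (Real.exp (-α₂*ε) * y) :=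
  scaling_symmetry_E3_general α₁ α₂ ε H₁ H₂ H₃ H₅
end

section
/- For the van der Waals quotient solution H₁ = c₂x, H₂ = 0, H₃ = c₁x(x/(x−3))^(2/n), H₅ = 2c₂x(c₂ζ(x−3) + 3Ry)/(nR(x−3)), the equation xH₁·∂H₃/∂x − H₅·∂H₃/∂y + H₂·∂H₅/∂x + H₃(∂H₅/∂y − H₁) = 0 holds for all x > 3 and all y. -/
/-!
Writing `q = x / (x - 3)`, the identity `q ^ (p - 1) * q = q ^ p` gives
`∂H₃/∂x = c₁ q ^ p (1 - 6 / (n (x - 3)))`, while `∂H₅/∂y = 6 c₂ x / (n (x - 3))` once `R` cancels.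
Since `∂H₃/∂y = 0` and `H₂ = 0`, the equation reduces to `c₁ c₂ x² q ^ p` times
`(1 - 6 / (n (x - 3))) + (6 / (n (x - 3)) - 1) = 0`.
-/
theorem hasDerivAt_mul_rpow_div_sub {a x : ℝ} (p : ℝ) (hx : x ≠ 0) (hxa : x - a ≠ 0) :
    HasDerivAt (fun t => t * (t / (t - a)) ^ p)
      ((x / (x - a)) ^ p * (1 - a * p / (x - a))) x := by
  have hq : x / (x - a) ≠ 0 := div_ne_zero hx hxa
  have hquot : HasDerivAt (fun t => t / (t - a)) ((1 * (x - a) - x * 1) / (x - a) ^ 2) x :=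
    (hasDerivAt_id' x).div ((hasDerivAt_id' x).sub_const a) hxa
  refine ((hasDerivAt_id' x).mul (hquot.rpow_const (p := p) (Or.inl hq))).congr_deriv ?_
  rw [show (x / (x - a)) ^ p = (x / (x - a)) ^ (p - 1) * (x / (x - a)) by
    rw [← Real.rpow_add_one hq, sub_add_cancel]]
  field_simp
  ring

theorem deriv_mul_add_mul_div (a b c d y : ℝ) :
    deriv (fun y => a * (b + c * y) / d) y = a * c / d := by
  rw [((((hasDerivAt_id' y).const_mul c).const_add b).const_mul a |>.div_const d).deriv, mul_one]

theorem vdw_quotient_eq4_general (c₁ c₂ R n ζ : ℝ) (hR : R ≠ 0) :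
    ∀ x y : ℝ, 3 < x →
      x * (c₂*x) * deriv (fun x' => c₁*x' * (x'/(x'-3)) ^ (2/n)) x
        - (2*c₂*x*(c₂*ζ*(x-3) + 3*R*y)/(n*R*(x-3))) *
            deriv (fun _y' : ℝ => c₁*x * (x/(x-3)) ^ (2/n)) y
        + 0 * deriv (fun x' => 2*c₂*x'*(c₂*ζ*(x'-3) + 3*R*y)/(n*R*(x'-3))) x
        + (c₁*x * (x/(x-3)) ^ (2/n)) *
            (deriv (fun y' => 2*c₂*x*(c₂*ζ*(x-3) + 3*R*y')/(n*R*(x-3))) y - c₂*x) = 0 := by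
  intro x y hx
  have hH₃ := (hasDerivAt_mul_rpow_div_sub (2 / n) (by linarith : x ≠ 0)
    (by linarith : x - 3 ≠ 0)).const_mul c₁
  simp only [← mul_assoc] at hH₃
  -- `/ n / (x - 3)` rather than `/ (n * (x - 3))`, so that `ring` sees the inverses of `hH₃`
  have hR_cancel : 2 * c₂ * x * (3 * R) / (n * R * (x - 3)) = 2 * c₂ * x * 3 / n / (x - 3) := by
    rw [show 2 * c₂ * x * (3 * R) = 2 * c₂ * x * 3 * R by ring,
      show n * R * (x - 3) = n * (x - 3) * R by ring, mul_div_mul_right _ _ hR, div_div]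
  rw [hH₃.deriv, deriv_const, deriv_mul_add_mul_div, hR_cancel]
  ring

theorem vdw_quotient_eq4 (c₁ c₂ R n ζ : ℝ) (hR : R ≠ 0) (hn : n ≠ 0) :
    ∀ x y : ℝ, 3 < x →
      x * (c₂*x) * deriv (fun x' => c₁*x' * (x'/(x'-3)) ^ (2/n)) x
        - (2*c₂*x*(c₂*ζ*(x-3) + 3*R*y)/(n*R*(x-3))) *
            deriv (fun _y' : ℝ => c₁*x * (x/(x-3)) ^ (2/n)) y
        + 0 * deriv (fun x' => 2*c₂*x'*(c₂*ζ*(x'-3) + 3*R*y)/(n*R*(x'-3))) x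
        + (c₁*x * (x/(x-3)) ^ (2/n)) *
            (deriv (fun y' => 2*c₂*x*(c₂*ζ*(x-3) + 3*R*y')/(n*R*(x-3))) y - c₂*x) = 0 :=
  vdw_quotient_eq4_general c₁ c₂ R n ζ hR
end
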